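/- Let T be an infinite tree and M an ergodic channel on a finite alphabet A. Then the reconstruction problem for T and M is solvable if and only if, when the root value σ_ρ is chosen uniformly at random from A, lim_{n→∞} I(σ_ρ, σ_n) > 0, where I denotes mutual information (the limit exists since I(σ_ρ, σ_n) is non-increasing in n, as σ_n is a Markov chain). -/
import Mathlib


open Filter

/-!
An infinite rooted tree in which every vertex has finitely many children is
modelled by the (finite, nonempty) types `V n` of vertices at distance `n`
from the root, together with the parent maps `V (n+1) → V n`; the root is the
unique element of `V 0`.
-/

/-- The distribution of the configuration at level `n` of the tree described by
the levels `V` and the parent maps `parent`, for the broadcast process with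
channel `M`, given that the root has value `i`. -/
noncomputable def treeDist {A : Type} [Fintype A] [DecidableEq A]
    {V : ℕ → Type} [∀ n, Fintype (V n)] [∀ n, DecidableEq (V n)]
    (M : A → A → ℝ) (parent : ∀ n, V (n + 1) → V n) (i : A) :
    (n : ℕ) → (V n → A) → ℝ
  | 0 => fun σ => if σ = (fun _ => i) then 1 else 0
  | n + 1 => fun τ => ∑ σ : V n → A, treeDist M parent i n σ *
      ∏ w : V (n + 1), M (σ (parent n w)) (τ w)

/-- Total variation distance between two (densities of) probability measures
on a finite set. -/
noncomputable def tvDist {Ω : Type*} [Fintype Ω] (P Q : Ω → ℝ) : ℝ :=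
  (1 / 2) * ∑ σ, |P σ - Q σ|

/-- The `m`-step transition probabilities of the channel `M`. -/
noncomputable def stepPow {A : Type} [Fintype A] [DecidableEq A]
    (M : A → A → ℝ) : ℕ → A → A → ℝ
  | 0 => fun i j => if i = j then 1 else 0
  | m + 1 => fun i j => ∑ k, stepPow M m i k * M k j

/-- `M` defines an ergodic (irreducible and aperiodic) markov chain: some power
of the transition matrix has all entries positive. -/
def IsErgodic {A : Type} [Fintype A] [DecidableEq A] (M : A → A → ℝ) : Prop :=
  ∃ m : ℕ, ∀ i j : A, 0 < stepPow M m i j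

/-- Shannon entropy of a probability density on a finite set. -/
noncomputable def entropy {Ω : Type*} [Fintype Ω] (p : Ω → ℝ) : ℝ :=
  ∑ x, Real.negMulLog (p x)

/-- The mutual information `I(σ_ρ, σ_n) = H(σ_ρ) + H(σ_n) - H(σ_ρ, σ_n)` between
the root variable (chosen uniformly) and the configuration at level `n`. -/
noncomputable def mutualInfoRoot {A : Type} [Fintype A] [DecidableEq A]
    {V : ℕ → Type} [∀ n, Fintype (V n)] [∀ n, DecidableEq (V n)]
    (M : A → A → ℝ) (parent : ∀ n, V (n + 1) → V n) (n : ℕ) : ℝ :=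
  entropy (fun _ : A => (Fintype.card A : ℝ)⁻¹)
    + entropy (fun σ : V n → A => ∑ i, (Fintype.card A : ℝ)⁻¹ * treeDist M parent i n σ)
    - entropy (fun p : A × (V n → A) => (Fintype.card A : ℝ)⁻¹ * treeDist M parent p.1 n p.2)


/-! ### Auxiliary lemmas -/

noncomputable def klTerm (p q : ℝ) : ℝ := p * Real.log p - p * Real.log q

noncomputable def KLd {Ω : Type*} [Fintype Ω] (P Q : Ω → ℝ) : ℝ :=
  ∑ x, klTerm (P x) (Q x)

@[simp] lemma klTerm_zero (q : ℝ) : klTerm 0 q = 0 := by simp [klTerm]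

lemma sub_le_klTerm {p q : ℝ} (hp : 0 ≤ p) (hq : 0 < q) : p - q ≤ klTerm p q := by
  rcases hp.eq_or_lt with h | hp'
  · rw [← h]
    simpa [klTerm] using hq.le
  · have h1 : Real.log (q / p) ≤ q / p - 1 := Real.log_le_sub_one_of_pos (by positivity)
    have h2 : Real.log (q / p) = Real.log q - Real.log p :=
      Real.log_div (ne_of_gt hq) (ne_of_gt hp')
    have h4 : p * (Real.log q - Real.log p) ≤ p * (q / p - 1) := by
      rw [← h2]; exact mul_le_mul_of_nonneg_left h1 hp
    have h3 : p * (q / p - 1) = q - p := by field_simp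
    unfold klTerm; nlinarith [h4, h3]

lemma klTerm_sum_le {ι : Type*} (s : Finset ι) (p q : ι → ℝ)
    (hp : ∀ x ∈ s, 0 ≤ p x) (hq : ∀ x ∈ s, 0 ≤ q x)
    (hac : ∀ x ∈ s, q x = 0 → p x = 0) :
    klTerm (∑ x ∈ s, p x) (∑ x ∈ s, q x) ≤ ∑ x ∈ s, klTerm (p x) (q x) := by
  have hP0 : 0 ≤ ∑ x ∈ s, p x := Finset.sum_nonneg hp
  have hQ0 : 0 ≤ ∑ x ∈ s, q x := Finset.sum_nonneg hq
  rcases hQ0.eq_or_lt with hQz | hQpos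
  · have hqz : ∀ x ∈ s, q x = 0 := (Finset.sum_eq_zero_iff_of_nonneg hq).1 hQz.symm
    have hpz : ∀ x ∈ s, p x = 0 := fun x hx => hac x hx (hqz x hx)
    rw [Finset.sum_eq_zero hpz, klTerm_zero]
    exact Finset.sum_nonneg fun x hx => by rw [hpz x hx]; simp
  · rcases hP0.eq_or_lt with hPz | hPpos
    · have hpz : ∀ x ∈ s, p x = 0 := (Finset.sum_eq_zero_iff_of_nonneg hp).1 hPz.symm
      rw [Finset.sum_eq_zero hpz, klTerm_zero]
      exact Finset.sum_nonneg fun x hx => by rw [hpz x hx]; simp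
    · set P := ∑ x ∈ s, p x with hP
      set Q := ∑ x ∈ s, q x with hQ
      have key : ∀ x ∈ s, p x * (Real.log P - Real.log Q) + (p x - q x * (P / Q))
          ≤ klTerm (p x) (q x) := by
        intro x hx
        rcases (hq x hx).eq_or_lt with hqz | hqpos
        · have hpz : p x = 0 := hac x hx hqz.symm
          rw [hpz, ← hqz]; simp
        · rcases (hp x hx).eq_or_lt with hpz | hppos
          · rw [← hpz, klTerm_zero]
            have : 0 ≤ q x * (P / Q) := by positivity
            simp; linarith
          · have hq' : 0 < q x * (P / Q) := by positivity
            have h := sub_le_klTerm hppos.le hq'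
            have hlog : Real.log (q x * (P / Q))
                = Real.log (q x) + (Real.log P - Real.log Q) := by
              rw [Real.log_mul (ne_of_gt hqpos) (by positivity),
                Real.log_div (ne_of_gt hPpos) (ne_of_gt hQpos)]
            unfold klTerm at h ⊢
            rw [hlog] at h
            nlinarith [h]
      have hsum : ∑ x ∈ s, (p x * (Real.log P - Real.log Q) + (p x - q x * (P / Q)))
          = klTerm P Q := by
        rw [Finset.sum_add_distrib, Finset.sum_sub_distrib, ← Finset.sum_mul,
          ← Finset.sum_mul, ← hP, ← hQ]
        unfold klTerm
        field_simp
        ring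
      rw [← hsum]
      exact Finset.sum_le_sum key

lemma klTerm_mul {p q c : ℝ} (hp : 0 ≤ p) (hq : 0 ≤ q) (hc : 0 ≤ c) (hac : q = 0 → p = 0) :
    klTerm (p * c) (q * c) = c * klTerm p q := by
  rcases hp.eq_or_lt with hpz | hpp
  · rw [← hpz]; simp [klTerm]
  · rcases hc.eq_or_lt with hcz | hcp
    · rw [← hcz]; simp [klTerm]
    · have hqp : 0 < q := by
        rcases hq.eq_or_lt with h | h
        · exact absurd (hac h.symm) (ne_of_gt hpp)
        · exact h
      unfold klTerm
      rw [Real.log_mul (ne_of_gt hpp) (ne_of_gt hcp),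
        Real.log_mul (ne_of_gt hqp) (ne_of_gt hcp)]
      ring

lemma KLd_kernel_le {Ω Ω' : Type*} [Fintype Ω] [Fintype Ω']
    (P Q : Ω → ℝ) (K : Ω → Ω' → ℝ)
    (hP : ∀ σ, 0 ≤ P σ) (hQ : ∀ σ, 0 ≤ Q σ) (hac : ∀ σ, Q σ = 0 → P σ = 0)
    (hK : ∀ σ τ, 0 ≤ K σ τ) (hK1 : ∀ σ, ∑ τ, K σ τ = 1) :
    KLd (fun τ => ∑ σ, P σ * K σ τ) (fun τ => ∑ σ, Q σ * K σ τ) ≤ KLd P Q := by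
  unfold KLd
  calc ∑ τ, klTerm (∑ σ, P σ * K σ τ) (∑ σ, Q σ * K σ τ)
      ≤ ∑ τ, ∑ σ, klTerm (P σ * K σ τ) (Q σ * K σ τ) := by
        refine Finset.sum_le_sum fun τ _ => ?_
        refine klTerm_sum_le Finset.univ _ _ (fun σ _ => mul_nonneg (hP σ) (hK σ τ))
          (fun σ _ => mul_nonneg (hQ σ) (hK σ τ)) (fun σ _ h => ?_)
        rcases mul_eq_zero.1 h with h' | h'
        · rw [hac σ h', zero_mul]
        · rw [h', mul_zero]
    _ = ∑ σ, ∑ τ, K σ τ * klTerm (P σ) (Q σ) := by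
        rw [Finset.sum_comm]
        exact Finset.sum_congr rfl fun σ _ => Finset.sum_congr rfl fun τ _ =>
          klTerm_mul (hP σ) (hQ σ) (hK σ τ) (hac σ)
    _ = ∑ σ, klTerm (P σ) (Q σ) := by
        refine Finset.sum_congr rfl fun σ _ => ?_
        rw [← Finset.sum_mul, hK1 σ, one_mul]

lemma KLd_nonneg {Ω : Type*} [Fintype Ω] (P Q : Ω → ℝ)
    (hP : ∀ x, 0 ≤ P x) (hQ : ∀ x, 0 ≤ Q x) (hPs : ∑ x, P x = 1) (hQs : ∑ x, Q x = 1)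
    (hac : ∀ x, Q x = 0 → P x = 0) : 0 ≤ KLd P Q := by
  have h := klTerm_sum_le Finset.univ P Q (fun x _ => hP x) (fun x _ => hQ x)
    (fun x _ hx => hac x hx)
  rw [hPs, hQs] at h
  simpa [KLd, klTerm] using h

lemma tvDist_nonneg {Ω : Type*} [Fintype Ω] (P Q : Ω → ℝ) : 0 ≤ tvDist P Q := by
  unfold tvDist
  have : 0 ≤ ∑ σ, |P σ - Q σ| := Finset.sum_nonneg fun σ _ => abs_nonneg _
  linarith

lemma tvDist_comm {Ω : Type*} [Fintype Ω] (P Q : Ω → ℝ) : tvDist P Q = tvDist Q P := by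
  unfold tvDist
  congr 1
  exact Finset.sum_congr rfl fun σ _ => abs_sub_comm _ _

lemma tvDist_le_one {Ω : Type*} [Fintype Ω] (P Q : Ω → ℝ)
    (hP : ∀ x, 0 ≤ P x) (hQ : ∀ x, 0 ≤ Q x)
    (hPs : ∑ x, P x = 1) (hQs : ∑ x, Q x = 1) : tvDist P Q ≤ 1 := by
  unfold tvDist
  have h : ∀ σ ∈ Finset.univ (α := Ω), |P σ - Q σ| ≤ P σ + Q σ := by
    intro σ _
    rw [abs_sub_le_iff]
    constructor <;> nlinarith [hP σ, hQ σ]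
  have h2 := Finset.sum_le_sum h
  rw [Finset.sum_add_distrib, hPs, hQs] at h2
  linarith

lemma tvDist_triangle {Ω : Type*} [Fintype Ω] (P Q R : Ω → ℝ) :
    tvDist P R ≤ tvDist P Q + tvDist Q R := by
  unfold tvDist
  rw [← mul_add, ← Finset.sum_add_distrib]
  have h : ∀ σ ∈ Finset.univ (α := Ω), |P σ - R σ| ≤ |P σ - Q σ| + |Q σ - R σ| :=
    fun σ _ => abs_sub_le _ _ _
  have h2 := Finset.sum_le_sum h
  linarith

lemma tvDist_kernel_le {Ω Ω' : Type*} [Fintype Ω] [Fintype Ω']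
    (P Q : Ω → ℝ) (K : Ω → Ω' → ℝ)
    (hK : ∀ σ τ, 0 ≤ K σ τ) (hK1 : ∀ σ, ∑ τ, K σ τ = 1) :
    tvDist (fun τ => ∑ σ, P σ * K σ τ) (fun τ => ∑ σ, Q σ * K σ τ) ≤ tvDist P Q := by
  unfold tvDist
  have key : ∀ τ : Ω', |∑ σ, P σ * K σ τ - ∑ σ, Q σ * K σ τ|
      ≤ ∑ σ, |P σ - Q σ| * K σ τ := by
    intro τ
    rw [← Finset.sum_sub_distrib]
    refine (Finset.abs_sum_le_sum_abs _ _).trans (Finset.sum_le_sum fun σ _ => ?_)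
    rw [← sub_mul, abs_mul, abs_of_nonneg (hK σ τ)]
  have h2 : ∑ τ, ∑ σ, |P σ - Q σ| * K σ τ = ∑ σ, |P σ - Q σ| := by
    rw [Finset.sum_comm]
    exact Finset.sum_congr rfl fun σ _ => by rw [← Finset.mul_sum, hK1 σ, mul_one]
  have h := Finset.sum_le_sum (fun τ (_ : τ ∈ Finset.univ) => key τ)
  rw [h2] at h
  linarith

lemma klTerm_le_abs {p q a : ℝ} (hp : 0 ≤ p) (hq : 0 ≤ q) (ha : 0 ≤ a)
    (hac : q = 0 → p = 0) (hpq : p ≤ a * q) : klTerm p q ≤ a * |p - q| := by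
  rcases hp.eq_or_lt with hpz | hpp
  · rw [← hpz, klTerm_zero]; positivity
  · have hqp : 0 < q := by
      rcases hq.eq_or_lt with h | h
      · exact absurd (hac h.symm) (ne_of_gt hpp)
      · exact h
    have h1 : Real.log (p / q) ≤ p / q - 1 := Real.log_le_sub_one_of_pos (by positivity)
    have h2 : klTerm p q = p * Real.log (p / q) := by
      unfold klTerm; rw [Real.log_div (ne_of_gt hpp) (ne_of_gt hqp)]; ring
    have h3 : p * Real.log (p / q) ≤ p * (p / q - 1) :=
      mul_le_mul_of_nonneg_left h1 hpp.le
    have h4 : p * (p / q - 1) = p * (p - q) / q := by field_simp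
    rcases le_total q p with h | h
    · have habs : |p - q| = p - q := abs_of_nonneg (by linarith)
      have h5 : p * (p - q) / q ≤ a * (p - q) := by
        rw [div_le_iff₀ hqp]
        nlinarith
      rw [h2, habs]; linarith
    · have h5 : p * (p - q) / q ≤ 0 :=
        div_nonpos_of_nonpos_of_nonneg (by nlinarith) hq
      have h6 : 0 ≤ a * |p - q| := by positivity
      rw [h2]; linarith

lemma min_add_max' (a b : ℝ) : min a b + max a b = a + b := by
  rcases le_total a b with h | h <;>
    simp [min_eq_left, max_eq_right, min_eq_right, max_eq_left, h] <;> ring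

lemma exp_neg_KLd_le {Ω : Type*} [Fintype Ω]
    (P Q : Ω → ℝ) (hP : ∀ x, 0 ≤ P x) (hQ : ∀ x, 0 ≤ Q x)
    (hPs : ∑ x, P x = 1) (hQs : ∑ x, Q x = 1) (hac : ∀ x, Q x = 0 → P x = 0) :
    Real.exp (-KLd P Q) ≤ 1 - tvDist P Q ^ 2 := by
  classical
  set s : Finset Ω := Finset.univ.filter (fun x => 0 < P x) with hs
  have hmem : ∀ x ∈ s, 0 < P x := fun x hx => (Finset.mem_filter.1 hx).2
  have hmemQ : ∀ x ∈ s, 0 < Q x := by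
    intro x hx
    rcases (hQ x).eq_or_lt with h | h
    · exact absurd (hac x h.symm) (ne_of_gt (hmem x hx))
    · exact h
  have hout : ∀ x ∈ Finset.univ, x ∉ s → P x = 0 := by
    intro x _ hx
    by_contra h
    exact hx (Finset.mem_filter.2 ⟨Finset.mem_univ x, (hP x).lt_of_ne (Ne.symm h)⟩)
  have hPs' : ∑ x ∈ s, P x = 1 := by
    rw [Finset.sum_subset (Finset.filter_subset _ _) hout, hPs]
  have hKL : -KLd P Q = ∑ x ∈ s, P x * Real.log (Q x / P x) := by
    have h1 : KLd P Q = ∑ x ∈ s, klTerm (P x) (Q x) := by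
      refine (Finset.sum_subset (Finset.filter_subset _ _) ?_).symm
      intro x hx hxs
      rw [hout x hx hxs, klTerm_zero]
    rw [h1, ← Finset.sum_neg_distrib]
    refine Finset.sum_congr rfl fun x hx => ?_
    rw [Real.log_div (ne_of_gt (hmemQ x hx)) (ne_of_gt (hmem x hx))]
    unfold klTerm; ring
  set r : Ω → ℝ := fun x => Real.sqrt (Q x / P x) with hr
  have hrpos : ∀ x ∈ s, 0 < r x := fun x hx =>
    Real.sqrt_pos.2 (div_pos (hmemQ x hx) (hmem x hx))
  have hKL2 : -KLd P Q = 2 * ∑ x ∈ s, P x * Real.log (r x) := by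
    rw [hKL, Finset.mul_sum]
    refine Finset.sum_congr rfl fun x hx => ?_
    rw [hr]
    rw [Real.log_sqrt (div_nonneg (hQ x) (hP x))]
    ring
  have hjen : ∑ x ∈ s, P x • Real.log (r x) ≤ Real.log (∑ x ∈ s, P x • r x) :=
    strictConcaveOn_log_Ioi.concaveOn.le_map_sum (fun x _ => hP x) hPs'
      (fun x hx => Set.mem_Ioi.2 (hrpos x hx))
  simp only [smul_eq_mul] at hjen
  set S : ℝ := ∑ x ∈ s, P x * r x with hS
  have hsne : s.Nonempty := by
    rcases Finset.eq_empty_or_nonempty s with h | h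
    · rw [h] at hPs'; simp at hPs'
    · exact h
  have hSpos : 0 < S :=
    Finset.sum_pos (fun x hx => mul_pos (hmem x hx) (hrpos x hx)) hsne
  have hstep1 : Real.exp (-KLd P Q) ≤ S ^ 2 := by
    rw [hKL2]
    have h2 : 2 * ∑ x ∈ s, P x * Real.log (r x) ≤ 2 * Real.log S := by linarith [hjen]
    calc Real.exp (2 * ∑ x ∈ s, P x * Real.log (r x))
        ≤ Real.exp (2 * Real.log S) := Real.exp_le_exp.2 h2
      _ = S ^ 2 := by rw [two_mul, Real.exp_add, Real.exp_log hSpos]; ring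
  have hPr : ∀ x ∈ s, P x * r x = Real.sqrt (P x * Q x) := by
    intro x hx
    have h1 : Real.sqrt (P x) ≠ 0 := ne_of_gt (Real.sqrt_pos.2 (hmem x hx))
    have h2 : Real.sqrt (P x) * Real.sqrt (P x) = P x := Real.mul_self_sqrt (hP x)
    show P x * Real.sqrt (Q x / P x) = Real.sqrt (P x * Q x)
    rw [Real.sqrt_div (hQ x), Real.sqrt_mul (hP x)]
    field_simp
    linear_combination (-(Real.sqrt (Q x))) * h2
  have hSeq : S = ∑ x ∈ s, Real.sqrt (P x * Q x) := Finset.sum_congr rfl hPr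
  have hext : S ≤ ∑ x, Real.sqrt (P x * Q x) := by
    rw [hSeq]
    exact Finset.sum_le_sum_of_subset_of_nonneg (Finset.filter_subset _ _)
      (fun x _ _ => Real.sqrt_nonneg _)
  have hCS : (∑ x, Real.sqrt (P x * Q x)) ^ 2
      ≤ (∑ x, min (P x) (Q x)) * (∑ x, max (P x) (Q x)) := by
    refine Finset.sum_sq_le_sum_mul_sum_of_sq_eq_mul Finset.univ
      (fun x _ => le_min (hP x) (hQ x)) (fun x _ => le_trans (hP x) (le_max_left _ _))
      (fun x _ => ?_)
    rw [Real.sq_sqrt (mul_nonneg (hP x) (hQ x))]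
    exact (min_mul_max (P x) (Q x)).symm
  have h1 : (∑ x, min (P x) (Q x)) + (∑ x, max (P x) (Q x)) = 2 := by
    rw [← Finset.sum_add_distrib]
    calc ∑ x, (min (P x) (Q x) + max (P x) (Q x)) = ∑ x, (P x + Q x) :=
          Finset.sum_congr rfl fun x _ => min_add_max' (P x) (Q x)
      _ = 2 := by rw [Finset.sum_add_distrib, hPs, hQs]; norm_num
  have h2 : (∑ x, max (P x) (Q x)) - (∑ x, min (P x) (Q x)) = 2 * tvDist P Q := by
    rw [← Finset.sum_sub_distrib]
    have heq : ∀ x : Ω, max (P x) (Q x) - min (P x) (Q x) = |P x - Q x| := by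
      intro x
      rw [show max (P x) (Q x) - min (P x) (Q x) = (P x) ⊔ (Q x) - (P x) ⊓ (Q x) from rfl,
        max_sub_min_eq_abs, abs_sub_comm]
    rw [Finset.sum_congr rfl fun x _ => heq x]
    unfold tvDist; ring
  have hmin : (∑ x, min (P x) (Q x)) = 1 - tvDist P Q := by linarith
  have hmax : (∑ x, max (P x) (Q x)) = 1 + tvDist P Q := by linarith
  calc Real.exp (-KLd P Q) ≤ S ^ 2 := hstep1
    _ ≤ (∑ x, Real.sqrt (P x * Q x)) ^ 2 := by nlinarith [hext, hSpos.le]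
    _ ≤ (1 - tvDist P Q) * (1 + tvDist P Q) := by rw [← hmin, ← hmax]; exact hCS
    _ = 1 - tvDist P Q ^ 2 := by ring

lemma entropy_eq {Ω : Type*} [Fintype Ω] (p : Ω → ℝ) :
    entropy p = -∑ x, p x * Real.log (p x) := by
  unfold entropy
  rw [← Finset.sum_neg_distrib]
  exact Finset.sum_congr rfl fun x _ => by simp [Real.negMulLog]

section Tree

variable {A : Type} [Fintype A] [DecidableEq A]
    {V : ℕ → Type} [∀ n, Fintype (V n)] [∀ n, DecidableEq (V n)]
    (M : A → A → ℝ) (parent : ∀ n, V (n + 1) → V n)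

lemma treeDist_succ (i : A) (n : ℕ) :
    treeDist M parent i (n + 1) = fun τ => ∑ σ : V n → A, treeDist M parent i n σ *
      ∏ w : V (n + 1), M (σ (parent n w)) (τ w) := rfl

lemma prodM_sum (hrow : ∀ i, ∑ j, M i j = 1) (n : ℕ) (σ : V n → A) :
    ∑ τ : V (n + 1) → A, ∏ w : V (n + 1), M (σ (parent n w)) (τ w) = 1 := by
  rw [← Fintype.prod_sum (fun (w : V (n + 1)) (j : A) => M (σ (parent n w)) j)]
  simp [hrow]

lemma treeDist_nonneg (hnn : ∀ i j, 0 ≤ M i j) (i : A) (n : ℕ) :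
    ∀ σ : V n → A, 0 ≤ treeDist M parent i n σ := by
  induction n with
  | zero =>
    intro σ
    simp only [treeDist]
    split <;> norm_num
  | succ n ih =>
    intro τ
    simp only [treeDist]
    exact Finset.sum_nonneg fun σ _ =>
      mul_nonneg (ih σ) (Finset.prod_nonneg fun w _ => hnn _ _)

lemma treeDist_sum (hrow : ∀ i, ∑ j, M i j = 1) (i : A) (n : ℕ) :
    ∑ σ : V n → A, treeDist M parent i n σ = 1 := by
  induction n with
  | zero =>
    simp only [treeDist]
    rw [Finset.sum_ite_eq' Finset.univ (fun _ => i) (fun _ => (1 : ℝ))]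
    simp
  | succ n ih =>
    simp only [treeDist]
    rw [Finset.sum_comm]
    have h1 : ∀ σ : V n → A, ∑ τ : V (n + 1) → A,
        treeDist M parent i n σ * ∏ w : V (n + 1), M (σ (parent n w)) (τ w)
        = treeDist M parent i n σ := by
      intro σ
      rw [← Finset.mul_sum, prodM_sum M parent hrow n σ, mul_one]
    rw [Finset.sum_congr rfl fun σ _ => h1 σ, ih]

/-- The average of the conditional level-`n` distributions. -/
noncomputable def pbar (n : ℕ) : (V n → A) → ℝ :=
  fun σ => ∑ i, (Fintype.card A : ℝ)⁻¹ * treeDist M parent i n σ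

lemma pbar_nonneg (hnn : ∀ i j, 0 ≤ M i j) (n : ℕ) (σ : V n → A) :
    0 ≤ pbar M parent n σ :=
  Finset.sum_nonneg fun i _ => mul_nonneg (by positivity)
    (treeDist_nonneg M parent hnn i n σ)

lemma pbar_sum [Nonempty A] (hrow : ∀ i, ∑ j, M i j = 1) (n : ℕ) :
    ∑ σ : V n → A, pbar M parent n σ = 1 := by
  unfold pbar
  rw [Finset.sum_comm]
  have h1 : ∀ i : A, ∑ σ : V n → A, (Fintype.card A : ℝ)⁻¹ * treeDist M parent i n σ
      = (Fintype.card A : ℝ)⁻¹ := by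
    intro i
    rw [← Finset.mul_sum, treeDist_sum M parent hrow i n, mul_one]
  rw [Finset.sum_congr rfl fun i _ => h1 i, Finset.sum_const, Finset.card_univ,
    nsmul_eq_mul]
  have : (Fintype.card A : ℝ) ≠ 0 := by exact_mod_cast Fintype.card_ne_zero
  field_simp

lemma pbar_ac [Nonempty A] (hnn : ∀ i j, 0 ≤ M i j) (n : ℕ) (σ : V n → A)
    (h : pbar M parent n σ = 0) (i : A) : treeDist M parent i n σ = 0 := by
  have hcard : (0:ℝ) < (Fintype.card A : ℝ) := by exact_mod_cast Fintype.card_pos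
  have hterm : ∀ j ∈ Finset.univ (α := A),
      0 ≤ (Fintype.card A : ℝ)⁻¹ * treeDist M parent j n σ :=
    fun j _ => mul_nonneg (by positivity) (treeDist_nonneg M parent hnn j n σ)
  have h0 := (Finset.sum_eq_zero_iff_of_nonneg hterm).1 h i (Finset.mem_univ i)
  rcases mul_eq_zero.1 h0 with h' | h'
  · exact absurd h' (by positivity)
  · exact h'

lemma treeDist_le_pbar [Nonempty A] (hnn : ∀ i j, 0 ≤ M i j) (n : ℕ) (σ : V n → A)
    (i : A) : treeDist M parent i n σ ≤ (Fintype.card A : ℝ) * pbar M parent n σ := by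
  have hcard : (0:ℝ) < (Fintype.card A : ℝ) := by exact_mod_cast Fintype.card_pos
  have hterm : ∀ j ∈ Finset.univ (α := A),
      0 ≤ (Fintype.card A : ℝ)⁻¹ * treeDist M parent j n σ :=
    fun j _ => mul_nonneg (by positivity) (treeDist_nonneg M parent hnn j n σ)
  have h1 : (Fintype.card A : ℝ)⁻¹ * treeDist M parent i n σ ≤ pbar M parent n σ :=
    Finset.single_le_sum hterm (Finset.mem_univ i)
  have h2 := mul_le_mul_of_nonneg_left h1 hcard.le
  rw [← mul_assoc, mul_inv_cancel₀ (ne_of_gt hcard), one_mul] at h2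
  exact h2

lemma pbar_succ (n : ℕ) :
    pbar M parent (n + 1) = fun τ => ∑ σ : V n → A, pbar M parent n σ *
      ∏ w : V (n + 1), M (σ (parent n w)) (τ w) := by
  funext τ
  show ∑ i : A, (Fintype.card A : ℝ)⁻¹ * treeDist M parent i (n + 1) τ = _
  have h1 : ∀ i : A, (Fintype.card A : ℝ)⁻¹ * treeDist M parent i (n + 1) τ
      = ∑ σ : V n → A, (Fintype.card A : ℝ)⁻¹ * treeDist M parent i n σ *
          ∏ w : V (n + 1), M (σ (parent n w)) (τ w) := by
    intro i
    rw [treeDist_succ M parent i n]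
    rw [Finset.mul_sum]
    exact Finset.sum_congr rfl fun σ _ => by ring
  rw [Finset.sum_congr rfl fun i _ => h1 i, Finset.sum_comm]
  refine Finset.sum_congr rfl fun σ _ => ?_
  rw [show pbar M parent n σ = ∑ i, (Fintype.card A : ℝ)⁻¹ * treeDist M parent i n σ
    from rfl, Finset.sum_mul]

lemma mi_eq [Nonempty A] (hrow : ∀ i, ∑ j, M i j = 1) (n : ℕ) :
    mutualInfoRoot M parent n = (Fintype.card A : ℝ)⁻¹ *
      ∑ i, KLd (treeDist M parent i n) (pbar M parent n) := by
  classical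
  have hcard : (Fintype.card A : ℝ) ≠ 0 := by
    exact_mod_cast Fintype.card_ne_zero
  set u : ℝ := (Fintype.card A : ℝ)⁻¹ with hu
  have e1 : entropy (fun _ : A => u) = (Fintype.card A : ℝ) * Real.negMulLog u := by
    unfold entropy
    rw [Finset.sum_const, Finset.card_univ, nsmul_eq_mul]
  have e3 : entropy (fun p : A × (V n → A) => u * treeDist M parent p.1 n p.2)
      = (Fintype.card A : ℝ) * Real.negMulLog u
        + u * ∑ i, entropy (treeDist M parent i n) := by
    unfold entropy
    rw [Fintype.sum_prod_type]
    have h1 : ∀ i : A, ∑ σ : V n → A, Real.negMulLog (u * treeDist M parent i n σ)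
        = Real.negMulLog u + u * ∑ σ, Real.negMulLog (treeDist M parent i n σ) := by
      intro i
      have h2 : ∀ σ : V n → A, Real.negMulLog (u * treeDist M parent i n σ)
          = treeDist M parent i n σ * Real.negMulLog u
            + u * Real.negMulLog (treeDist M parent i n σ) :=
        fun σ => Real.negMulLog_mul u (treeDist M parent i n σ)
      rw [Finset.sum_congr rfl fun σ _ => h2 σ, Finset.sum_add_distrib,
        ← Finset.sum_mul, treeDist_sum M parent hrow i n, one_mul, ← Finset.mul_sum]
    rw [Finset.sum_congr rfl fun i _ => h1 i, Finset.sum_add_distrib,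
      Finset.sum_const, Finset.card_univ, nsmul_eq_mul, ← Finset.mul_sum]
  have hK : ∀ i : A, KLd (treeDist M parent i n) (pbar M parent n)
      = -entropy (treeDist M parent i n)
        - ∑ σ, treeDist M parent i n σ * Real.log (pbar M parent n σ) := by
    intro i
    rw [entropy_eq]
    unfold KLd klTerm
    rw [Finset.sum_sub_distrib]
    ring
  have hswap : ∑ i : A, ∑ σ : V n → A,
      u * (treeDist M parent i n σ * Real.log (pbar M parent n σ))
      = -entropy (pbar M parent n) := by
    rw [Finset.sum_comm, entropy_eq, neg_neg]
    refine Finset.sum_congr rfl fun σ _ => ?_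
    rw [show pbar M parent n σ = ∑ i, u * treeDist M parent i n σ from rfl,
      Finset.sum_mul]
    exact Finset.sum_congr rfl fun i _ => by ring
  have hRHS : u * ∑ i, KLd (treeDist M parent i n) (pbar M parent n)
      = entropy (pbar M parent n) - u * ∑ i, entropy (treeDist M parent i n) := by
    rw [Finset.mul_sum, Finset.sum_congr rfl fun i _ => congrArg (u * ·) (hK i)]
    simp only [mul_sub, mul_neg, Finset.mul_sum]
    rw [Finset.sum_sub_distrib, hswap, Finset.sum_neg_distrib]
    ring
  unfold mutualInfoRoot
  rw [show entropy (fun σ : V n → A => ∑ i, (Fintype.card A : ℝ)⁻¹ * treeDist M parent i n σ)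
      = entropy (pbar M parent n) from rfl]
  rw [← hu]
  rw [e1, e3, hRHS]
  ring

lemma mi_anti [Nonempty A] (hnn : ∀ i j, 0 ≤ M i j) (hrow : ∀ i, ∑ j, M i j = 1)
    (n : ℕ) : mutualInfoRoot M parent (n + 1) ≤ mutualInfoRoot M parent n := by
  rw [mi_eq M parent hrow n, mi_eq M parent hrow (n + 1)]
  have hu : (0:ℝ) ≤ (Fintype.card A : ℝ)⁻¹ := by positivity
  refine mul_le_mul_of_nonneg_left (Finset.sum_le_sum fun i _ => ?_) hu
  have h := KLd_kernel_le (treeDist M parent i n) (pbar M parent n)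
      (fun (σ : V n → A) (τ : V (n + 1) → A) => ∏ w : V (n + 1), M (σ (parent n w)) (τ w))
      (treeDist_nonneg M parent hnn i n) (pbar_nonneg M parent hnn n)
      (fun σ hσ => pbar_ac M parent hnn n σ hσ i)
      (fun σ τ => Finset.prod_nonneg fun w _ => hnn _ _)
      (prodM_sum M parent hrow n)
  rw [treeDist_succ M parent i n, pbar_succ M parent n]
  exact h

lemma mi_nonneg [Nonempty A] (hnn : ∀ i j, 0 ≤ M i j) (hrow : ∀ i, ∑ j, M i j = 1)
    (n : ℕ) : 0 ≤ mutualInfoRoot M parent n := by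
  rw [mi_eq M parent hrow n]
  have hu : (0:ℝ) ≤ (Fintype.card A : ℝ)⁻¹ := by positivity
  refine mul_nonneg hu (Finset.sum_nonneg fun i _ => ?_)
  exact KLd_nonneg _ _ (treeDist_nonneg M parent hnn i n) (pbar_nonneg M parent hnn n)
    (treeDist_sum M parent hrow i n) (pbar_sum M parent hrow n)
    (fun σ hσ => pbar_ac M parent hnn n σ hσ i)

lemma tv_succ_le (hnn : ∀ i j, 0 ≤ M i j) (hrow : ∀ i, ∑ j, M i j = 1) (i j : A)
    (n : ℕ) : tvDist (treeDist M parent i (n + 1)) (treeDist M parent j (n + 1))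
      ≤ tvDist (treeDist M parent i n) (treeDist M parent j n) := by
  rw [treeDist_succ M parent i n, treeDist_succ M parent j n]
  exact tvDist_kernel_le _ _ _
    (fun σ τ => Finset.prod_nonneg fun w _ => hnn _ _)
    (prodM_sum M parent hrow n)

lemma mi_le [Nonempty A] (hnn : ∀ i j, 0 ≤ M i j) (hrow : ∀ i, ∑ j, M i j = 1)
    (n : ℕ) : mutualInfoRoot M parent n
      ≤ (2 * (Fintype.card A : ℝ)⁻¹) *
        ∑ i, ∑ j, tvDist (treeDist M parent i n) (treeDist M parent j n) := by
  classical
  have hcard : (0:ℝ) < (Fintype.card A : ℝ) := by exact_mod_cast Fintype.card_pos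
  rw [mi_eq M parent hrow n]
  have h1 : ∀ i : A, KLd (treeDist M parent i n) (pbar M parent n)
      ≤ (Fintype.card A : ℝ) * (2 * tvDist (treeDist M parent i n) (pbar M parent n)) := by
    intro i
    unfold KLd
    have hterm : ∀ σ ∈ Finset.univ (α := V n → A),
        klTerm (treeDist M parent i n σ) (pbar M parent n σ)
        ≤ (Fintype.card A : ℝ) * |treeDist M parent i n σ - pbar M parent n σ| := by
      intro σ _
      exact klTerm_le_abs (treeDist_nonneg M parent hnn i n σ)
        (pbar_nonneg M parent hnn n σ) hcard.le
        (fun h => pbar_ac M parent hnn n σ h i)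
        (treeDist_le_pbar M parent hnn n σ i)
    refine (Finset.sum_le_sum hterm).trans_eq ?_
    rw [← Finset.mul_sum]
    unfold tvDist
    ring
  have h2 : ∀ i : A, tvDist (treeDist M parent i n) (pbar M parent n)
      ≤ (Fintype.card A : ℝ)⁻¹ *
        ∑ j, tvDist (treeDist M parent i n) (treeDist M parent j n) := by
    intro i
    have key : ∀ σ : V n → A, |treeDist M parent i n σ - pbar M parent n σ|
        ≤ ∑ j, (Fintype.card A : ℝ)⁻¹ *
            |treeDist M parent i n σ - treeDist M parent j n σ| := by
      intro σ
      have hre : treeDist M parent i n σ - pbar M parent n σ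
          = ∑ j : A, ((Fintype.card A : ℝ)⁻¹ * treeDist M parent i n σ
              - (Fintype.card A : ℝ)⁻¹ * treeDist M parent j n σ) := by
        rw [Finset.sum_sub_distrib, Finset.sum_const, Finset.card_univ, nsmul_eq_mul]
        have hid : (Fintype.card A : ℝ) * ((Fintype.card A : ℝ)⁻¹ *
            treeDist M parent i n σ) = treeDist M parent i n σ := by
          field_simp
        rw [hid]
        rfl
      rw [hre]
      refine (Finset.abs_sum_le_sum_abs _ _).trans (le_of_eq ?_)
      refine Finset.sum_congr rfl fun j _ => ?_
      rw [← mul_sub, abs_mul, abs_of_nonneg (by positivity : (0:ℝ) ≤ (Fintype.card A : ℝ)⁻¹)]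
    have hsum := Finset.sum_le_sum (fun σ (_ : σ ∈ Finset.univ) => key σ)
    have hswap2 : ∑ σ : V n → A, ∑ j : A, (Fintype.card A : ℝ)⁻¹ *
        |treeDist M parent i n σ - treeDist M parent j n σ|
        = ∑ j : A, (Fintype.card A : ℝ)⁻¹ *
            (2 * tvDist (treeDist M parent i n) (treeDist M parent j n)) := by
      rw [Finset.sum_comm]
      refine Finset.sum_congr rfl fun j _ => ?_
      rw [← Finset.mul_sum]
      unfold tvDist
      ring
    rw [hswap2] at hsum
    have hrw : (Fintype.card A : ℝ)⁻¹ *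
        ∑ j, tvDist (treeDist M parent i n) (treeDist M parent j n)
        = (1/2) * ∑ j : A, (Fintype.card A : ℝ)⁻¹ *
            (2 * tvDist (treeDist M parent i n) (treeDist M parent j n)) := by
      rw [Finset.mul_sum, Finset.mul_sum]
      exact Finset.sum_congr rfl fun j _ => by ring
    rw [hrw]
    have hdef : tvDist (treeDist M parent i n) (pbar M parent n)
        = (1/2) * ∑ σ : V n → A, |treeDist M parent i n σ - pbar M parent n σ| := rfl
    rw [hdef]
    linarith [hsum]
  have hstep : ∀ i ∈ Finset.univ (α := A),
      KLd (treeDist M parent i n) (pbar M parent n)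
      ≤ 2 * ∑ j, tvDist (treeDist M parent i n) (treeDist M parent j n) := by
    intro i _
    refine (h1 i).trans ?_
    have := mul_le_mul_of_nonneg_left (h2 i) (by positivity : (0:ℝ) ≤ 2 * (Fintype.card A : ℝ))
    calc (Fintype.card A : ℝ) * (2 * tvDist (treeDist M parent i n) (pbar M parent n))
        = 2 * (Fintype.card A : ℝ) * tvDist (treeDist M parent i n) (pbar M parent n) := by ring
      _ ≤ 2 * (Fintype.card A : ℝ) * ((Fintype.card A : ℝ)⁻¹ *
            ∑ j, tvDist (treeDist M parent i n) (treeDist M parent j n)) := by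
          exact mul_le_mul_of_nonneg_left (h2 i) (by positivity)
      _ = 2 * (((Fintype.card A : ℝ)) * (Fintype.card A : ℝ)⁻¹) *
            ∑ j, tvDist (treeDist M parent i n) (treeDist M parent j n) := by ring
      _ = 2 * ∑ j, tvDist (treeDist M parent i n) (treeDist M parent j n) := by
          rw [mul_inv_cancel₀ (ne_of_gt hcard)]; ring
  have hfin := Finset.sum_le_sum hstep
  have hu : (0:ℝ) ≤ (Fintype.card A : ℝ)⁻¹ := by positivity
  calc (Fintype.card A : ℝ)⁻¹ * ∑ i, KLd (treeDist M parent i n) (pbar M parent n)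
      ≤ (Fintype.card A : ℝ)⁻¹ * ∑ i, 2 *
          ∑ j, tvDist (treeDist M parent i n) (treeDist M parent j n) :=
        mul_le_mul_of_nonneg_left hfin hu
    _ = (2 * (Fintype.card A : ℝ)⁻¹) *
          ∑ i, ∑ j, tvDist (treeDist M parent i n) (treeDist M parent j n) := by
        rw [← Finset.mul_sum]
        ring

lemma mi_ge [Nonempty A] (hnn : ∀ i j, 0 ≤ M i j) (hrow : ∀ i, ∑ j, M i j = 1)
    {i j : A} {n : ℕ} {L : ℝ} (hL : 0 < L)
    (h : L ≤ tvDist (treeDist M parent i n) (treeDist M parent j n)) :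
    (Fintype.card A : ℝ)⁻¹ * -Real.log (1 - (L / 2) ^ 2)
      ≤ mutualInfoRoot M parent n := by
  classical
  have hcard : (0:ℝ) < (Fintype.card A : ℝ) := by exact_mod_cast Fintype.card_pos
  rw [mi_eq M parent hrow n]
  have htri := tvDist_triangle (treeDist M parent i n) (pbar M parent n)
    (treeDist M parent j n)
  obtain ⟨k, hk⟩ : ∃ k : A, L / 2 ≤ tvDist (treeDist M parent k n) (pbar M parent n) := by
    have h1 : tvDist (pbar M parent n) (treeDist M parent j n)
        = tvDist (treeDist M parent j n) (pbar M parent n) := tvDist_comm _ _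
    rw [h1] at htri
    rcases le_total (tvDist (treeDist M parent i n) (pbar M parent n))
        (tvDist (treeDist M parent j n) (pbar M parent n)) with hc | hc
    · exact ⟨j, by linarith⟩
    · exact ⟨i, by linarith⟩
  have hBH := exp_neg_KLd_le (treeDist M parent k n) (pbar M parent n)
    (treeDist_nonneg M parent hnn k n) (pbar_nonneg M parent hnn n)
    (treeDist_sum M parent hrow k n) (pbar_sum M parent hrow n)
    (fun σ hσ => pbar_ac M parent hnn n σ hσ k)
  have htv2 : (L / 2) ^ 2 ≤ tvDist (treeDist M parent k n) (pbar M parent n) ^ 2 := by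
    nlinarith [hk, hL]
  have hexp : Real.exp (-KLd (treeDist M parent k n) (pbar M parent n))
      ≤ 1 - (L / 2) ^ 2 := by linarith
  have hB0 : 0 < 1 - (L / 2) ^ 2 := lt_of_lt_of_le (Real.exp_pos _) hexp
  have hKL : -Real.log (1 - (L / 2) ^ 2)
      ≤ KLd (treeDist M parent k n) (pbar M parent n) := by
    have hlog := (Real.le_log_iff_exp_le hB0).2 hexp
    linarith
  have hsum : KLd (treeDist M parent k n) (pbar M parent n)
      ≤ ∑ i', KLd (treeDist M parent i' n) (pbar M parent n) :=
    Finset.single_le_sum (fun i' _ => KLd_nonneg _ _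
      (treeDist_nonneg M parent hnn i' n) (pbar_nonneg M parent hnn n)
      (treeDist_sum M parent hrow i' n) (pbar_sum M parent hrow n)
      (fun σ hσ => pbar_ac M parent hnn n σ hσ i')) (Finset.mem_univ k)
  have hu : (0:ℝ) ≤ (Fintype.card A : ℝ)⁻¹ := by positivity
  exact mul_le_mul_of_nonneg_left (le_trans hKL hsum) hu

end Tree

/-- For an infinite tree `T` and an ergodic channel `M`, the reconstruction
problem is solvable if and only if the mutual information between the uniformly
chosen root variable and the level-`n` configuration has a positive limit. -/
theorem solvable_iff_mutualInfo_pos {A : Type} [Fintype A] [DecidableEq A]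
    (M : A → A → ℝ) (hnn : ∀ i j, 0 ≤ M i j) (hrow : ∀ i, ∑ j, M i j = 1)
    (herg : IsErgodic M)
    (V : ℕ → Type) [∀ n, Fintype (V n)] [∀ n, DecidableEq (V n)] [Unique (V 0)]
    (parent : ∀ n, V (n + 1) → V n) (hinf : ∀ n, Nonempty (V n)) :
    (∃ i j : A, ∃ L > 0, Tendsto
        (fun n => tvDist (treeDist M parent i n) (treeDist M parent j n))
        atTop (nhds L)) ↔
    (∃ L > 0, Tendsto (fun n => mutualInfoRoot M parent n) atTop (nhds L)) := by
  classical
  rcases isEmpty_or_nonempty A with hA | hA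
  · constructor
    · rintro ⟨i, -⟩
      exact (IsEmpty.false i).elim
    · rintro ⟨L, hL, hT⟩
      exfalso
      have hzero : ∀ n, mutualInfoRoot M parent n = 0 := by
        intro n
        haveI : IsEmpty (V n → A) := ⟨fun f => (hinf n).elim fun v => (IsEmpty.false (f v))⟩
        unfold mutualInfoRoot entropy
        simp
      have h0 : Tendsto (fun n => mutualInfoRoot M parent n) atTop (nhds 0) := by
        simp only [hzero]
        exact tendsto_const_nhds
      have := tendsto_nhds_unique hT h0
      linarith
  · have hcard : (0:ℝ) < (Fintype.card A : ℝ) := by exact_mod_cast Fintype.card_pos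
    have tvanti : ∀ i j : A, Antitone
        (fun n => tvDist (treeDist M parent i n) (treeDist M parent j n)) :=
      fun i j => antitone_nat_of_succ_le fun n => tv_succ_le M parent hnn hrow i j n
    have mianti : Antitone (fun n => mutualInfoRoot M parent n) :=
      antitone_nat_of_succ_le fun n => mi_anti M parent hnn hrow n
    have minn : ∀ n, 0 ≤ mutualInfoRoot M parent n :=
      fun n => mi_nonneg M parent hnn hrow n
    constructor
    · rintro ⟨i, j, L, hL, hT⟩
      refine ⟨⨅ n, mutualInfoRoot M parent n, ?_,
        tendsto_atTop_ciInf mianti ⟨0, by rintro x ⟨n, rfl⟩; exact minn n⟩⟩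
      have hLn : ∀ n, L ≤ tvDist (treeDist M parent i n) (treeDist M parent j n) := by
        intro n
        exact le_of_tendsto hT (Filter.eventually_atTop.2 ⟨n, fun m hm => tvanti i j hm⟩)
      have hL1 : L ≤ 1 := by
        refine (hLn 0).trans (tvDist_le_one _ _
          (treeDist_nonneg M parent hnn i 0) (treeDist_nonneg M parent hnn j 0)
          (treeDist_sum M parent hrow i 0) (treeDist_sum M parent hrow j 0))
      have hB0 : 0 < 1 - (L / 2) ^ 2 := by nlinarith
      have hB1 : 1 - (L / 2) ^ 2 < 1 := by nlinarith
      have hδ : 0 < (Fintype.card A : ℝ)⁻¹ * -Real.log (1 - (L / 2) ^ 2) := by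
        have := Real.log_neg hB0 hB1
        have hu : (0:ℝ) < (Fintype.card A : ℝ)⁻¹ := by positivity
        nlinarith
      have hinfge : (Fintype.card A : ℝ)⁻¹ * -Real.log (1 - (L / 2) ^ 2)
          ≤ ⨅ n, mutualInfoRoot M parent n :=
        le_ciInf fun n => mi_ge M parent hnn hrow hL (hLn n)
      linarith
    · rintro ⟨L, hL, hT⟩
      by_contra hcon
      push_neg at hcon
      have htv0 : ∀ i j : A, Tendsto
          (fun n => tvDist (treeDist M parent i n) (treeDist M parent j n))
          atTop (nhds 0) := by
        intro i j
        have hbdd : BddBelow (Set.range fun n =>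
            tvDist (treeDist M parent i n) (treeDist M parent j n)) :=
          ⟨0, by rintro x ⟨n, rfl⟩; exact tvDist_nonneg _ _⟩
        have hTij := tendsto_atTop_ciInf (tvanti i j) hbdd
        have hge : 0 ≤ ⨅ n, tvDist (treeDist M parent i n) (treeDist M parent j n) :=
          le_ciInf fun n => tvDist_nonneg _ _
        rcases hge.eq_or_lt with h | h
        · rwa [← h] at hTij
        · exact absurd hTij (hcon i j _ h)
      have hgsum : Tendsto (fun n => ∑ i : A, ∑ j : A,
          tvDist (treeDist M parent i n) (treeDist M parent j n)) atTop (nhds 0) := by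
        have h := tendsto_finset_sum (Finset.univ (α := A))
          (fun i _ => tendsto_finset_sum (Finset.univ (α := A)) (fun j _ => htv0 i j))
        simpa using h
      have hg : Tendsto (fun n => (2 * (Fintype.card A : ℝ)⁻¹) * ∑ i : A, ∑ j : A,
          tvDist (treeDist M parent i n) (treeDist M parent j n)) atTop (nhds 0) := by
        have := hgsum.const_mul (2 * (Fintype.card A : ℝ)⁻¹)
        simpa using this
      have hmi0 : Tendsto (fun n => mutualInfoRoot M parent n) atTop (nhds 0) :=
        squeeze_zero minn (fun n => mi_le M parent hnn hrow n) hg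
      have := tendsto_nhds_unique hT hmi0
      linarith
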